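/- arXiv:2407.19335 — 3 statements merged into one kernel-verified Lean document; each statement's English description precedes it below -/
import Mathlib

section
/- Suppose p : ℝ → ℝ³ is twice differentiable with p(0) ≠ 0, v = p', and along the trajectory ‖p(t)‖ > r for all t and h(p(t), v(t)) ≥ 0 for all t, where h(p,v)=⟪p,v⟫+‖v‖√(‖p‖²−r²). If additionally v(t) = v₀ is constant and nonzero with h(p(0), v₀) ≥ 0, then ‖p(0) + t·v₀‖ ≥ r for all t ≥ 0 (a velocity outside the collision cone with straight-line motion never enters the ball of radius r). -/
open Real RealInnerProductSpace

theorem collision_cone_safe_forward (r : ℝ) (hr : 0 < r)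
    (p₀ v₀ : EuclideanSpace ℝ (Fin 3)) (hp : r < ‖p₀‖) (hv : v₀ ≠ 0)
    (hh : 0 ≤ ⟪p₀, v₀⟫ + ‖v₀‖ * Real.sqrt (‖p₀‖ ^ 2 - r ^ 2)) :
    ∀ t : ℝ, 0 ≤ t → r ≤ ‖p₀ + t • v₀‖ := by
  intro t ht
  set s := Real.sqrt (‖p₀‖ ^ 2 - r ^ 2) with hs
  have hnn : (0:ℝ) ≤ ‖p₀‖ ^ 2 - r ^ 2 := by nlinarith [hr.le, hp]
  have hs2 : s ^ 2 = ‖p₀‖ ^ 2 - r ^ 2 := Real.sq_sqrt hnn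
  have hsnn : 0 ≤ s := Real.sqrt_nonneg _
  have hexp : ‖p₀ + t • v₀‖ ^ 2 =
      ‖p₀‖ ^ 2 + 2 * t * ⟪p₀, v₀⟫ + t ^ 2 * ‖v₀‖ ^ 2 := by
    rw [norm_add_sq_real, real_inner_smul_right, norm_smul]
    rw [Real.norm_eq_abs, mul_pow, sq_abs]
    ring
  have key : r ^ 2 ≤ ‖p₀ + t • v₀‖ ^ 2 := by
    rw [hexp]
    nlinarith [sq_nonneg (s - t * ‖v₀‖), mul_nonneg ht (norm_nonneg v₀)]
  by_contra hcon
  push_neg at hcon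
  have : ‖p₀ + t • v₀‖ ^ 2 < r ^ 2 := by
    nlinarith [norm_nonneg (p₀ + t • v₀)]
  linarith
end

section
/- For straight-line motion p(t) = p₀ + t·v₀ with ‖p₀‖ > r and h(p₀, v₀) < 0 (velocity strictly inside the collision cone, v₀ ≠ 0), there exists t > 0 such that ‖p(t)‖ < r. -/
/-!
Along the line `p₀ + t • v₀` the squared distance to the origin is a quadratic in `t`, minimised at
`t* = -⟪p₀, v₀⟫ / ‖v₀‖²` with minimum `‖p₀‖² - ⟪p₀, v₀⟫² / ‖v₀‖²`. The cone condition says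
`⟪p₀, v₀⟫ < 0`, so `t* > 0`, and `√(‖p₀‖² - r²) < -⟪p₀, v₀⟫ / ‖v₀‖`, which squares to "the minimum is
below `r²`".
-/

open Real RealInnerProductSpace

section CollisionCone

variable {E : Type*} [NormedAddCommGroup E] [InnerProductSpace ℝ E]

theorem norm_add_smul_sq_real (p v : E) (t : ℝ) :
    ‖p + t • v‖ ^ 2 = ‖p‖ ^ 2 + 2 * t * ⟪p, v⟫ + t ^ 2 * ‖v‖ ^ 2 := by
  rw [norm_add_sq_real, real_inner_smul_right, norm_smul, mul_pow, Real.norm_eq_abs, sq_abs]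
  ring

theorem norm_add_neg_inner_div_smul_sq {v : E} (hv : v ≠ 0) (p : E) :
    ‖p + (-⟪p, v⟫ / ‖v‖ ^ 2) • v‖ ^ 2 = ‖p‖ ^ 2 - ⟪p, v⟫ ^ 2 / ‖v‖ ^ 2 := by
  have hv2 : ‖v‖ ^ 2 ≠ 0 := by positivity
  rw [norm_add_smul_sq_real]
  field_simp
  ring

variable {r : ℝ} {p v : E}

theorem inner_neg_of_mem_collision_cone (hh : ⟪p, v⟫ + ‖v‖ * √(‖p‖ ^ 2 - r ^ 2) < 0) :
    ⟪p, v⟫ < 0 := by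
  have : 0 ≤ ‖v‖ * √(‖p‖ ^ 2 - r ^ 2) := by positivity
  linarith

theorem norm_sq_sub_inner_sq_div_lt_of_mem_collision_cone
    (hh : ⟪p, v⟫ + ‖v‖ * √(‖p‖ ^ 2 - r ^ 2) < 0) :
    ‖p‖ ^ 2 - ⟪p, v⟫ ^ 2 / ‖v‖ ^ 2 < r ^ 2 := by
  have ha := inner_neg_of_mem_collision_cone hh
  have hv : 0 < ‖v‖ := norm_pos_iff.mpr fun h ↦ by simp [h] at ha
  have hsqrt : √(‖p‖ ^ 2 - r ^ 2) < -⟪p, v⟫ / ‖v‖ := by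
    rw [lt_div_iff₀ hv]
    linarith
  have hsq := (Real.sqrt_lt' (div_pos (neg_pos.mpr ha) hv)).mp hsqrt
  rw [div_pow, neg_sq] at hsq
  linarith

end CollisionCone

theorem collision_cone_unsafe_collides_general (r : ℝ) (hr : 0 < r)
    (p₀ v₀ : EuclideanSpace ℝ (Fin 3))
    (hh : ⟪p₀, v₀⟫ + ‖v₀‖ * Real.sqrt (‖p₀‖ ^ 2 - r ^ 2) < 0) :
    ∃ t : ℝ, 0 < t ∧ ‖p₀ + t • v₀‖ < r := by
  have ha := inner_neg_of_mem_collision_cone hh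
  have hv : v₀ ≠ 0 := fun h ↦ by simp [h] at ha
  refine ⟨-⟪p₀, v₀⟫ / ‖v₀‖ ^ 2, div_pos (neg_pos.mpr ha) (by positivity), ?_⟩
  have hmin : ‖p₀ + (-⟪p₀, v₀⟫ / ‖v₀‖ ^ 2) • v₀‖ ^ 2 < r ^ 2 := by
    rw [norm_add_neg_inner_div_smul_sq hv]
    exact norm_sq_sub_inner_sq_div_lt_of_mem_collision_cone hh
  exact lt_of_pow_lt_pow_left₀ 2 hr.le hmin

theorem collision_cone_unsafe_collides (r : ℝ) (hr : 0 < r)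
    (p₀ v₀ : EuclideanSpace ℝ (Fin 3)) (hp : r < ‖p₀‖) (hv : v₀ ≠ 0)
    (hh : ⟪p₀, v₀⟫ + ‖v₀‖ * Real.sqrt (‖p₀‖ ^ 2 - r ^ 2) < 0) :
    ∃ t : ℝ, 0 < t ∧ ‖p₀ + t • v₀‖ < r :=
  collision_cone_unsafe_collides_general r hr p₀ v₀ hh
end

section
/- If h(p,v) = ⟪p,v⟫ + ‖v‖√(‖p‖² − r²) > 0 and v ≠ 0, then the minimum squared distance of the line t ↦ p + t v (over t ≥ 0) to the origin exceeds r²: min_{t ≥ 0} ‖p + t v‖² > r². -/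
open Real RealInnerProductSpace

theorem strict_cone_min_distance (p v : EuclideanSpace ℝ (Fin 3)) (hv : v ≠ 0)
    (r : ℝ) (hr : 0 < r) (hrp : r < ‖p‖)
    (hh : 0 < ⟪p, v⟫ + ‖v‖ * Real.sqrt (‖p‖ ^ 2 - r ^ 2)) :
    ∀ t : ℝ, 0 ≤ t → r ^ 2 < ‖p + t • v‖ ^ 2 := by
  intro t ht
  have hps : 0 ≤ ‖p‖ ^ 2 - r ^ 2 := by nlinarith [norm_nonneg p]
  set s := Real.sqrt (‖p‖ ^ 2 - r ^ 2) with hsdef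
  have hs2 : s ^ 2 = ‖p‖ ^ 2 - r ^ 2 := Real.sq_sqrt hps
  have hsn : 0 ≤ s := Real.sqrt_nonneg _
  have hexp : ‖p + t • v‖ ^ 2 = ‖p‖ ^ 2 + 2 * (t * ⟪p, v⟫) + t ^ 2 * ‖v‖ ^ 2 := by
    rw [norm_add_sq_real, real_inner_smul_right, norm_smul]
    simp [abs_of_nonneg ht]
    ring
  rcases eq_or_lt_of_le ht with h0 | h0
  · rw [hexp, ← h0]
    nlinarith
  · rw [hexp]
    nlinarith [sq_nonneg (s - t * ‖v‖), mul_pos h0 hh]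
end
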